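/- arXiv:1302.3431 — 5 statements merged into one kernel-verified Lean document; each statement's English description precedes it below -/
import Mathlib

section
/- Let κ be an infinite cardinal, μ a cardinal, and F a family of functions from κ to μ. Suppose there exists h : F → κ such that for every f ∈ F the set {ζ < κ : ∃ g ∈ F, g ≠ f, h(g) = h(f), g(ζ) = f(ζ)} has cardinality < κ. Then F can be written as a union of κ many subfamilies ⟨F_{ε,ζ} : ε, ζ < κ⟩ such that for each pair (ε,ζ), the map f ↦ f(ζ) is injective on F_{ε,ζ}. -/
open Cardinal

theorem stmt2 {κ μ : Type u} [Infinite κ] (F : Set (κ → μ)) (h : F → κ)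
    (hfree : ∀ f : F, #{ζ : κ | ∃ g : F, g ≠ f ∧ h g = h f ∧
        (g : κ → μ) ζ = (f : κ → μ) ζ} < #κ) :
    ∃ B : κ → κ → Set F, (∀ f : F, ∃ ε ζ, f ∈ B ε ζ) ∧
      ∀ ε ζ, ∀ f ∈ B ε ζ, ∀ g ∈ B ε ζ,
        (f : κ → μ) ζ = (g : κ → μ) ζ → f = g := by
  have hex : ∀ f : F, ∃ ζ : κ, ζ ∉ {ζ : κ | ∃ g : F, g ≠ f ∧ h g = h f ∧
      (g : κ → μ) ζ = (f : κ → μ) ζ} := by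
    intro f
    by_contra hc
    push_neg at hc
    have : {ζ : κ | ∃ g : F, g ≠ f ∧ h g = h f ∧
        (g : κ → μ) ζ = (f : κ → μ) ζ} = Set.univ := Set.eq_univ_of_forall hc
    have h2 := hfree f
    rw [this] at h2
    simp at h2
  choose z hz using hex
  refine ⟨fun ε ζ => {f | h f = ε ∧ z f = ζ}, fun f => ⟨h f, z f, rfl, rfl⟩, ?_⟩
  rintro ε ζ f ⟨hf1, hf2⟩ g ⟨hg1, hg2⟩ heq
  by_contra hne
  subst hf2
  exact hz f ⟨g, fun e => hne e.symm, hg1.trans hf1.symm, heq.symm⟩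
end

section
/- Let κ be an infinite cardinal, a = (A, ⟨R_ε : ε<κ⟩) a set with κ binary relations, and M a structure with partition ⟨P_η^M : η ∈ A⟩ of |M| and partial unary functions F_ε^M such that F_ζ^M(a₂) = a₁, a₁ ∈ P_{η₁}^M, a₂ ∈ P_{η₂}^M implies η₁ R_ζ η₂. Let G_M be the graph on |M| with edges {a, F_ε^M(a)} for a ∈ |M|, ε < κ with F_ε^M(a) defined and ≠ a. If B ⊆ A is a-free — i.e., there exist a well-ordering <* of B and h : B → κ with: (h(η)=h(ν) and ν R_ζ η for some ζ implies ν <* η) and (for every η ∈ B, |{ζ < κ : ∃ ν <* η, ν R_ζ η, h(ν)=h(η)}| < κ) — then the induced subgraph of G_M on ⋃{P_η^M : η ∈ B} has chromatic number at most κ. -/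
open Cardinal

theorem stmt8 {κ A : Type u} [Infinite κ] (R : κ → A → A → Prop)
    {W : Type u} (P : W → A) (Fn : κ → W → Option W)
    (hcompat : ∀ ζ (w w' : W), Fn ζ w = some w' → R ζ (P w') (P w))
    (B : Set A) (r : B → B → Prop) (hr : IsWellOrder B r) (h : B → κ)
    (h1 : ∀ η ν : B, h η = h ν → (∃ ζ, R ζ (ν : A) (η : A)) → r ν η)
    (h2 : ∀ η : B, #{ζ : κ | ∃ ν : B, r ν η ∧ R ζ (ν : A) (η : A) ∧ h ν = h η} < #κ) :
    ∃ c : {w : W // P w ∈ B} → κ, ∀ u v : {w : W // P w ∈ B},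
      ((u : W) ≠ (v : W) ∧
        ∃ ε, (Fn ε (u : W) = some (v : W) ∨ Fn ε (v : W) = some (u : W))) →
      c u ≠ c v := by
  classical
  let V := {w : W // P w ∈ B}
  let pη : V → B := fun v => ⟨P v, v.2⟩
  let s : V → V → Prop := fun u v => r (pη u) (pη v)
  have wfs : WellFounded s := InvImage.wf pη hr.wf
  let N : V → Set κ := fun v =>
    {ζ : κ | ∃ ν : B, r ν (pη v) ∧ R ζ (ν : A) ((pη v) : A) ∧ h ν = h (pη v)}
  have hN : ∀ v : V, #(N v) < #κ := fun v => h2 (pη v)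
  let F : ∀ v : V, (∀ u : V, s u v → κ) → Set κ :=
    fun v ih => {k | ∃ ζ ∈ N v, ∃ (u : V) (hu : s u v),
      Fn ζ (v : W) = some (u : W) ∧ ih u hu = k}
  have key : ∀ (v : V) (ih : ∀ u : V, s u v → κ), ∃ k, k ∉ F v ih := by
    intro v ih
    by_contra hcon
    push_neg at hcon
    have hFuniv : F v ih = Set.univ := Set.eq_univ_of_forall hcon
    have hle : #(F v ih) ≤ #(N v) := by
      choose ζf hmem uf huf hFn hih using fun k : F v ih => k.2
      refine Cardinal.mk_le_of_injective (f := fun k => (⟨ζf k, hmem k⟩ : N v)) ?_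
      intro k1 k2 heq
      have hζ : ζf k1 = ζf k2 := congrArg Subtype.val heq
      have hu : uf k1 = uf k2 := by
        have := (hFn k1).symm.trans (hζ ▸ hFn k2)
        exact Subtype.ext (Option.some_injective _ this)
      have : (k1 : κ) = (k2 : κ) := by
        rw [← hih k1, ← hih k2]
        congr 1
      exact Subtype.ext this
    rw [hFuniv, Cardinal.mk_univ] at hle
    exact absurd (hle.trans_lt (hN v)) (lt_irrefl _)
  let g : V → κ := wfs.fix (fun v ih => Classical.choose (key v ih))
  have gspec : ∀ v : V, g v ∉ F v (fun u _ => g u) := by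
    intro v
    have : g v = Classical.choose (key v (fun u _ => g u)) :=
      wfs.fix_eq (fun v ih => Classical.choose (key v ih)) v
    rw [this]
    exact Classical.choose_spec (key v (fun u _ => g u))
  -- edge lemma (same h-value)
  have edge : ∀ (u v : V) (ε : κ), Fn ε (u : W) = some (v : W) →
      h (pη u) = h (pη v) → g u ≠ g v := by
    intro u v ε hFn hh hg
    have hR : R ε (P (v : W)) (P (u : W)) := hcompat ε _ _ hFn
    have hrvu : r (pη v) (pη u) := h1 (pη u) (pη v) hh ⟨ε, hR⟩
    have hεN : ε ∈ N u := ⟨pη v, hrvu, hR, hh.symm⟩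
    exact gspec u ⟨ε, hεN, v, hrvu, hFn, hg.symm⟩
  -- combine with h-value
  have hcard : #(κ × κ) = #κ := by
    simp only [Cardinal.mk_prod, Cardinal.lift_id]
    exact Cardinal.mul_eq_self (Cardinal.aleph0_le_mk κ)
  obtain ⟨e⟩ := Cardinal.eq.mp hcard
  refine ⟨fun v => e (h (pη v), g v), ?_⟩
  rintro u v ⟨hne, ε, hcase⟩ hc
  have hpair : (h (pη u), g u) = (h (pη v), g v) := e.injective hc
  have hh : h (pη u) = h (pη v) := congrArg Prod.fst hpair
  have hg : g u = g v := congrArg Prod.snd hpair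
  rcases hcase with hFn | hFn
  · exact edge u v ε hFn hh hg
  · exact edge v u ε hFn hh.symm hg.symm
end

section
/- Let κ be an infinite cardinal and a = (A, ⟨R_ε : ε<κ⟩). Let M satisfy: ⟨P_η^M : η ∈ A⟩ partitions |M|, partial unary functions F_ε^M respect the R_ε (F_ζ^M(a₂)=a₁ with a_i ∈ P_{η_i}^M implies η₁ R_ζ η₂), and the richness condition: for every η ∈ A, u ⊆ κ, and ν_ζ R_ζ η with a_ζ ∈ P_{ν_ζ}^M (ζ ∈ u), some a ∈ P_η^M has F_ζ^M(a) = a_ζ for ζ ∈ u and F_ζ^M(a) undefined otherwise. Let G_M be the graph on |M| with edges {a, F_ε^M(a)}. Suppose c : |M| → κ is a proper coloring of G_M, and fix a well-ordering <* of A. For η ∈ A set H_η = {c(a) : a ∈ P_η^M} and Λ_{η,ε,ζ} = {ν ∈ A : ν <* η, ν R_ζ η, ε ∈ H_ν}. Then there is NO η ∈ A such that for every ε ∈ H_η there are κ many ζ < κ with Λ_{η,ε,ζ} ≠ ∅. -/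
open Cardinal

lemma inj_choice {κ : Type u} [Infinite κ] {ι : Set κ} (S : ι → Set κ)
    (hS : ∀ i, #(S i) = #κ) :
    ∃ g : ι → κ, Function.Injective g ∧ ∀ i, g i ∈ S i := by
  let β := (#ι).ord.ToType
  have hβ : #β = #ι := Cardinal.mk_ord_toType _
  obtain ⟨e⟩ : Nonempty (ι ≃ β) := Cardinal.eq.mp hβ.symm
  let s : ι → ι → Prop := fun a b => e a < e b
  have hwf : WellFounded s := InvImage.wf e (IsWellFounded.wf (r := (· < · : β → β → Prop)))
  have key : ∀ (i : ι) (f : ∀ j, s j i → κ),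
      ∃ x, x ∈ S i ∧ ∀ (j) (hj : s j i), x ≠ f j hj := by
    intro i f
    by_contra h
    push_neg at h
    have hsub : S i ⊆ Set.range (fun p : {j // s j i} => f p p.2) := by
      intro x hx
      obtain ⟨j, hj, hx'⟩ := h x hx
      exact ⟨⟨j, hj⟩, hx'.symm⟩
    have h1 : #(S i) ≤ #{j // s j i} := (Cardinal.mk_le_mk_of_subset hsub).trans
      Cardinal.mk_range_le
    have h2 : #{j // s j i} < #κ := by
      have e1 : #{j // s j i} = #(Set.Iio (e i)) := by
        refine Cardinal.mk_congr ⟨fun p => ⟨e p.1, p.2⟩, fun q => ⟨e.symm q.1, ?_⟩, ?_, ?_⟩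
        · show e (e.symm q.1) < e i
          rw [e.apply_symm_apply]; exact q.2
        · intro p; simp
        · intro q; simp
      rw [e1]
      exact (Cardinal.mk_Iio_ord_toType (e i)).trans_le (Cardinal.mk_subtype_le _)
    rw [hS i] at h1
    exact absurd h1 (not_le.mpr h2)
  let g : ι → κ := WellFounded.fix hwf (fun i f => (key i f).choose)
  have hfix : ∀ i, g i = (key i (fun j _ => g j)).choose := fun i =>
    WellFounded.fix_eq hwf _ i
  have hmem : ∀ i, g i ∈ S i := fun i => by
    rw [hfix i]; exact (key i _).choose_spec.1
  have hne : ∀ (i j : ι), s j i → g i ≠ g j := fun i j hj => by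
    rw [hfix i]; exact (key i _).choose_spec.2 j hj
  refine ⟨g, fun a b hab => ?_, hmem⟩
  by_contra h
  rcases lt_trichotomy (e a) (e b) with h' | h' | h'
  · exact hne b a h' hab.symm
  · exact h (e.injective h')
  · exact hne a b h' hab

theorem stmt9 {κ A : Type u} [Infinite κ] (R : κ → A → A → Prop)
    {W : Type u} (P : W → A) (Fn : κ → W → Option W)
    (hcompat : ∀ ζ (w w' : W), Fn ζ w = some w' → R ζ (P w') (P w))
    (hne : ∀ η : A, ∃ w : W, P w = η)
    (hrich : ∀ (η : A) (u : Set κ) (ν : u → A), (∀ ζ : u, R ζ (ν ζ) η) →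
      ∀ aa : u → W, (∀ ζ : u, P (aa ζ) = ν ζ) →
        ∃ w : W, P w = η ∧ (∀ ζ : u, Fn ζ w = some (aa ζ)) ∧
          ∀ ζ : κ, ζ ∉ u → Fn ζ w = none)
    (c : W → κ)
    (hc : ∀ u v : W,
      (u ≠ v ∧ ∃ ε, (Fn ε u = some v ∨ Fn ε v = some u)) → c u ≠ c v)
    (r : A → A → Prop) (hr : IsWellOrder A r) :
    ¬ ∃ η : A, ∀ ε ∈ {x : κ | ∃ a : W, P a = η ∧ c a = x},
      #{ζ : κ | ∃ ν : A, r ν η ∧ R ζ ν η ∧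
        ε ∈ {x : κ | ∃ a : W, P a = ν ∧ c a = x}} = #κ := by
  rintro ⟨η, hη⟩
  set H : Set κ := {x : κ | ∃ a : W, P a = η ∧ c a = x} with hH
  let S : H → Set κ := fun ε => {ζ : κ | ∃ ν : A, r ν η ∧ R ζ ν η ∧
    (ε : κ) ∈ {x : κ | ∃ a : W, P a = ν ∧ c a = x}}
  obtain ⟨g, hg_inj, hg_mem⟩ := inj_choice S (fun ε => hη ε ε.2)
  -- u = range of g
  let u : Set κ := Set.range g
  -- for each ζ ∈ u, get its ε
  have hsel : ∀ ζ : u, ∃ ε : H, g ε = ζ := fun ζ => ζ.2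
  let ee : u → H := fun ζ => (hsel ζ).choose
  have hee : ∀ ζ : u, g (ee ζ) = ζ := fun ζ => (hsel ζ).choose_spec
  -- data from membership in S
  have hdata : ∀ ζ : u, ∃ ν : A, r ν η ∧ R ζ ν η ∧ ∃ a : W, P a = ν ∧ c a = ee ζ := by
    intro ζ
    have := hg_mem (ee ζ)
    rw [hee ζ] at this
    exact this
  let ν : u → A := fun ζ => (hdata ζ).choose
  have hν1 : ∀ ζ : u, r (ν ζ) η := fun ζ => (hdata ζ).choose_spec.1
  have hν2 : ∀ ζ : u, R ζ (ν ζ) η := fun ζ => (hdata ζ).choose_spec.2.1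
  have hν3 : ∀ ζ : u, ∃ a : W, P a = ν ζ ∧ c a = ee ζ := fun ζ =>
    (hdata ζ).choose_spec.2.2
  let aa : u → W := fun ζ => (hν3 ζ).choose
  have haa1 : ∀ ζ : u, P (aa ζ) = ν ζ := fun ζ => (hν3 ζ).choose_spec.1
  have haa2 : ∀ ζ : u, c (aa ζ) = ee ζ := fun ζ => (hν3 ζ).choose_spec.2
  obtain ⟨w, hwP, hwF, -⟩ := hrich η u ν hν2 aa haa1
  -- c w ∈ H
  have hcw : c w ∈ H := ⟨w, hwP, rfl⟩
  set ε₀ : H := ⟨c w, hcw⟩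
  have hζ₀ : g ε₀ ∈ u := ⟨ε₀, rfl⟩
  set ζ₀ : u := ⟨g ε₀, hζ₀⟩
  have hee₀ : ee ζ₀ = ε₀ := hg_inj (hee ζ₀)
  have hF : Fn (ζ₀ : κ) w = some (aa ζ₀) := hwF ζ₀
  have hne' : w ≠ aa ζ₀ := by
    intro h
    have heq : P (aa ζ₀) = η := by rw [← h, hwP]
    rw [haa1 ζ₀] at heq
    haveI := hr
    exact irrefl_of r η (heq ▸ hν1 ζ₀)
  have := hc w (aa ζ₀) ⟨hne', ζ₀, Or.inl hF⟩
  apply this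
  rw [haa2 ζ₀, hee₀]
end

section
/- Let κ be an infinite cardinal and a = (A, ⟨R_ε : ε<κ⟩). Let M and G_M be as in the richness setting (M ∈ K*_a): ⟨P_η^M : η ∈ A⟩ partitions |M| into nonempty classes, F_ε^M are partial unary functions respecting the R_ε, richness holds, and G_M is the graph with edges {a, F_ε^M(a)}. If A is NOT strongly free for a — i.e., there exists a well-ordering <* of A such that for no h : A → κ do we have: for every η ∈ A, the set {ζ < κ : ∃ ν <* η, ν R_ζ η, h(ν) = h(η)} has cardinality < κ — then the chromatic number of G_M is greater than κ: there is no proper coloring c : |M| → κ. -/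
open Cardinal

/-- Injective choice: if each `S ε ⊆ κ` has cardinality not less than `#κ`,
then there is an injective transversal. -/
lemma stmt10_inj_choice {κ : Type u} (S : κ → Set κ)
    (hS : ∀ ε, ¬ #(S ε) < #κ) :
    ∃ f : κ → κ, Function.Injective f ∧ ∀ ε, f ε ∈ S ε := by
  obtain ⟨r', wo, hord⟩ := Cardinal.ord_eq κ
  have hsmall : ∀ ε : κ, #{x | r' x ε} < #κ := by
    intro ε
    have h1 := Ordinal.typein_lt_type r' ε
    rw [← hord, Cardinal.lt_ord] at h1
    exact lt_of_eq_of_lt (Ordinal.card_typein (r := r') ε) h1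
  have hstep : ∀ (ε : κ) (IH : ∀ x, r' x ε → κ),
      ∃ z, z ∈ S ε ∧ ∀ x (h : r' x ε), IH x h ≠ z := by
    intro ε IH
    by_contra hcon
    push_neg at hcon
    have hsub : S ε ⊆ Set.range (fun p : {x // r' x ε} => IH p.1 p.2) := by
      intro z hz
      obtain ⟨x, h, hxz⟩ := hcon z hz
      exact ⟨⟨x, h⟩, hxz⟩
    have hle : #(S ε) ≤ #{x | r' x ε} :=
      (Cardinal.mk_le_mk_of_subset hsub).trans Cardinal.mk_range_le
    exact hS ε (hle.trans_lt (hsmall ε))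
  haveI := wo
  let F : ∀ ε : κ, (∀ x, r' x ε → κ) → κ := fun ε IH => (hstep ε IH).choose
  let f : κ → κ := wo.wf.fix F
  have hfe : ∀ ε, f ε = F ε (fun x _ => f x) := fun ε => wo.wf.fix_eq F ε
  have hspec : ∀ ε, f ε ∈ S ε ∧ ∀ x, r' x ε → f x ≠ f ε := by
    intro ε
    have h := (hstep ε (fun x _ => f x)).choose_spec
    rw [hfe ε]
    exact ⟨h.1, fun x hx => h.2 x hx⟩
  refine ⟨f, ?_, fun ε => (hspec ε).1⟩
  intro a b hab
  by_contra hne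
  rcases trichotomous_of r' a b with h | h | h
  · exact (hspec b).2 a h hab
  · exact hne h
  · exact (hspec a).2 b h hab.symm

theorem stmt10 {κ A : Type u} [Infinite κ] (R : κ → A → A → Prop)
    {W : Type u} (P : W → A) (Fn : κ → W → Option W)
    (hcompat : ∀ ζ (w w' : W), Fn ζ w = some w' → R ζ (P w') (P w))
    (hne : ∀ η : A, ∃ w : W, P w = η)
    (hrich : ∀ (η : A) (u : Set κ) (ν : u → A), (∀ ζ : u, R ζ (ν ζ) η) →
      ∀ aa : u → W, (∀ ζ : u, P (aa ζ) = ν ζ) →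
        ∃ w : W, P w = η ∧ (∀ ζ : u, Fn ζ w = some (aa ζ)) ∧
          ∀ ζ : κ, ζ ∉ u → Fn ζ w = none)
    (hnsf : ∃ r : A → A → Prop, IsWellOrder A r ∧
      ∀ h : A → κ, ∃ η : A,
        ¬ #{ζ : κ | ∃ ν : A, r ν η ∧ R ζ ν η ∧ h ν = h η} < #κ) :
    ¬ ∃ c : W → κ, ∀ u v : W,
      (u ≠ v ∧ ∃ ε, (Fn ε u = some v ∨ Fn ε v = some u)) → c u ≠ c v := by
  rintro ⟨c, hc⟩
  obtain ⟨r, hr, hbad⟩ := hnsf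
  haveI := hr
  -- H η : set of colors appearing on the fiber over η
  set H : A → Set κ := fun η => {ε | ∃ w, P w = η ∧ c w = ε} with hHdef
  by_cases hcase : ∀ η : A, ∃ ε ∈ H η,
      #{ζ : κ | ∃ ν, r ν η ∧ R ζ ν η ∧ ε ∈ H ν} < #κ
  · -- Case 2 of the paper: a suitable h exists, contradicting hbad
    choose h hmem hsmall using hcase
    obtain ⟨η, hη⟩ := hbad h
    apply hη
    refine lt_of_le_of_lt (Cardinal.mk_le_mk_of_subset ?_) (hsmall η)
    rintro ζ ⟨ν, hrν, hR, hhν⟩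
    exact ⟨ν, hrν, hR, hhν ▸ hmem ν⟩
  · -- Case 1: some η has, for every ε ∈ H η, κ many good ζ's
    push_neg at hcase
    obtain ⟨η, hη⟩ := hcase
    classical
    set S' : κ → Set κ := fun ε =>
      if ε ∈ H η then {ζ : κ | ∃ ν, r ν η ∧ R ζ ν η ∧ ε ∈ H ν} else Set.univ
      with hS'def
    have hS' : ∀ ε, ¬ #(S' ε) < #κ := by
      intro ε
      by_cases hε : ε ∈ H η
      · simp only [hS'def, if_pos hε]
        intro hlt
        exact absurd hlt (not_lt_of_ge (hη ε hε))
      · simp only [hS'def, if_neg hε, Cardinal.mk_univ]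
        exact lt_irrefl _
    obtain ⟨f, hfinj, hfS⟩ := stmt10_inj_choice S' hS'
    have hsel : ∀ ε : {ε // ε ∈ H η},
        ∃ ν, r ν η ∧ R (f ε.1) ν η ∧ ∃ a, P a = ν ∧ c a = ε.1 := by
      intro ε
      have := hfS ε.1
      rw [hS'def] at this
      simp only [if_pos ε.2] at this
      exact this
    choose ν hνr hνR a hPa hca using hsel
    -- the set of indices used
    set u : Set κ := Set.range (fun ε : {ε // ε ∈ H η} => f ε.1) with hudef
    have hex : ∀ ζ : u, ∃ ε : {ε // ε ∈ H η}, f ε.1 = ζ.1 := fun ζ => ζ.2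
    choose e he using hex
    have hR' : ∀ ζ : u, R ζ.1 (ν (e ζ)) η := by
      intro ζ
      have := hνR (e ζ)
      rwa [he ζ] at this
    obtain ⟨w, hPw, hFn, _⟩ := hrich η u (fun ζ => ν (e ζ)) hR'
      (fun ζ => a (e ζ)) (fun ζ => hPa (e ζ))
    -- the color of w belongs to H η; find the corresponding neighbor
    have hε₀ : c w ∈ H η := ⟨w, hPw, rfl⟩
    set E : {ε // ε ∈ H η} := ⟨c w, hε₀⟩ with hEdef
    have hζmem : f E.1 ∈ u := ⟨E, rfl⟩
    set ζ' : u := ⟨f E.1, hζmem⟩ with hζ'def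
    have heE : e ζ' = E := by
      have h1 : f (e ζ').1 = f E.1 := he ζ'
      exact Subtype.ext (hfinj h1)
    have hedge : Fn (f E.1) w = some (a E) := by
      have := hFn ζ'
      rwa [heE] at this
    have hwa : w ≠ a E := by
      intro hcontr
      have h1 : P (a E) = η := by rw [← hcontr, hPw]
      have h2 : ν E = η := by rw [← hPa E, h1]
      have := hνr E
      rw [h2] at this
      exact irrefl_of r η this
    have hcolor : c (a E) = c w := hca E
    exact hc w (a E) ⟨hwa, ⟨f E.1, Or.inl hedge⟩⟩ hcolor.symm
end

section
/- Let κ be an infinite cardinal. Suppose G is a graph on a vertex set V of cardinality μ with chromatic number > κ, but every induced subgraph of G on fewer than λ vertices has chromatic number ≤ κ. Fix a well-ordering <* of V and define, for every ε < κ, the binary relation R_ε on V by: ν R_ε η iff {ν,η} is an edge of G and ν <* η (so all R_ε are equal). Then (V, ⟨R_ε : ε < κ⟩) witnesses Inc[μ,λ,κ]: (i) every B ⊆ V with |B| < λ is free, i.e., there exist a well-ordering <' of B and h : B → κ such that h(η)=h(ν) ∧ ν R_ζ η implies ν <' η, and for each η ∈ B the set {ζ < κ : ∃ ν <' η, ν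 R_ζ η, h(ν)=h(η)} has size < κ; and (ii) V itself is not strongly free: for some well-ordering of V, no h : V → κ makes all exceptional sets of size < κ. -/
/-! All the relations `R_ε` coincide, so the exceptional set of `η` under `h` does not depend on
`ζ`: it is empty or all of `κ`, and it is small exactly when it is empty. Hence a colouring `h`
has only small exceptional sets for the well-ordering `r` iff it is a proper colouring. Small
sets `B` carry a proper colouring by hypothesis, which makes them free with the restriction
of `r`; a colouring of `V` with small exceptional sets would be a proper `κ`-colouring of `G`. -/

open Cardinal

variable {W κ : Type*}

theorem mk_setOf_const_lt_iff [Nonempty κ] (p : Prop) : #{_ζ : κ | p} < #κ ↔ ¬p := by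
  by_cases hp : p <;> simp [hp, pos_iff_ne_zero]

theorem mk_exceptional_lt_of_proper (G : SimpleGraph W) (lt : W → W → Prop) {c : W → κ}
    (hc : ∀ u v, G.Adj u v → c u ≠ c v) (η : W) :
    #{_ζ : κ | ∃ ν, lt ν η ∧ (G.Adj ν η ∧ lt ν η) ∧ c ν = c η} < #κ := by
  have : Nonempty κ := ⟨c η⟩
  rw [mk_setOf_const_lt_iff]
  rintro ⟨ν, -, ⟨hadj, -⟩, hcν⟩
  exact hc ν η hadj hcν

theorem proper_of_forall_mk_exceptional_lt (G : SimpleGraph W) (r : W → W → Prop)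
    [Std.Trichotomous r] (h : W → κ)
    (hexc : ∀ η, #{_ζ : κ | ∃ ν, r ν η ∧ (G.Adj ν η ∧ r ν η) ∧ h ν = h η} < #κ) :
    ∀ u v, G.Adj u v → h u ≠ h v := by
  intro u v hadj huv
  have : Nonempty κ := ⟨h u⟩
  have not_lt : ∀ a b, G.Adj a b → h a = h b → ¬r a b := fun a b hab hh hrab =>
    (mk_setOf_const_lt_iff _).1 (hexc b) ⟨a, hrab, ⟨hab, hrab⟩, hh⟩
  rcases trichotomous_of r u v with huv' | rfl | hvu
  · exact not_lt u v hadj huv huv'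
  · exact hadj.ne rfl
  · exact not_lt v u hadj.symm huv.symm hvu

theorem stmt11_general {V κ : Type u} (G : SimpleGraph V)
    (lam : Cardinal.{u})
    (hχ : ¬ ∃ c : V → κ, ∀ u v : V, G.Adj u v → c u ≠ c v)
    (hloc : ∀ B : Set V, #B < lam →
      ∃ c : B → κ, ∀ u v : B, G.Adj (u : V) (v : V) → c u ≠ c v)
    (r : V → V → Prop) (hr : IsWellOrder V r) :
    (∀ B : Set V, #B < lam →
      ∃ r' : B → B → Prop, IsWellOrder B r' ∧ ∃ h : B → κ,
        (∀ η ν : B, h η = h ν →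
          (G.Adj (ν : V) (η : V) ∧ r (ν : V) (η : V)) → r' ν η) ∧
        ∀ η : B, #{ζ : κ | ∃ ν : B, r' ν η ∧
          (G.Adj (ν : V) (η : V) ∧ r (ν : V) (η : V)) ∧ h ν = h η} < #κ) ∧
    (∃ r'' : V → V → Prop, IsWellOrder V r'' ∧ ∀ h : V → κ, ∃ η : V,
      ¬ #{ζ : κ | ∃ ν : V, r'' ν η ∧ (G.Adj ν η ∧ r ν η) ∧ h ν = h η} < #κ) := by
  refine ⟨fun B hB => ?_, r, hr, fun h => ?_⟩
  · obtain ⟨c, hc⟩ := hloc B hB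
    exact ⟨Subrel r (· ∈ B), (Subrel.relEmbedding r (· ∈ B)).isWellOrder, c,
      fun _ _ _ hνη => hνη.2, mk_exceptional_lt_of_proper (G.induce B) _ hc⟩
  · by_contra! hexc
    exact hχ ⟨h, proper_of_forall_mk_exceptional_lt G r h hexc⟩

theorem stmt11 {V κ : Type u} [Infinite κ] (G : SimpleGraph V)
    (μ lam : Cardinal.{u}) (hμ : #V = μ)
    (hχ : ¬ ∃ c : V → κ, ∀ u v : V, G.Adj u v → c u ≠ c v)
    (hloc : ∀ B : Set V, #B < lam →
      ∃ c : B → κ, ∀ u v : B, G.Adj (u : V) (v : V) → c u ≠ c v)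
    (r : V → V → Prop) (hr : IsWellOrder V r) :
    (∀ B : Set V, #B < lam →
      ∃ r' : B → B → Prop, IsWellOrder B r' ∧ ∃ h : B → κ,
        (∀ η ν : B, h η = h ν →
          (G.Adj (ν : V) (η : V) ∧ r (ν : V) (η : V)) → r' ν η) ∧
        ∀ η : B, #{ζ : κ | ∃ ν : B, r' ν η ∧
          (G.Adj (ν : V) (η : V) ∧ r (ν : V) (η : V)) ∧ h ν = h η} < #κ) ∧
    (∃ r'' : V → V → Prop, IsWellOrder V r'' ∧ ∀ h : V → κ, ∃ η : V,
      ¬ #{ζ : κ | ∃ ν : V, r'' ν η ∧ (G.Adj ν η ∧ r ν η) ∧ h ν = h η} < #κ) :=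
  stmt11_general G lam hχ hloc r hr
end
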